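/- For every y_0 ∈ Y, liminf_{T→∞} V_T(y_0) ≥ d*(y_0). -/

import Mathlib

/-!
Dual feasibility of `(μ, ψ, η)` makes `ψ` nondecreasing along every admissible trajectory, so
`ψ y₀ - ψ (y t) ≤ 0` and the first constraint gives `k (y t, u t) ≥ μ + η (y t) - η (y (t + 1))`.
Summing over `t < T` telescopes the `η`-terms, whence `V_T(y₀) ≥ μ - 2 ‖η‖_∞ / T` and, letting
`T → ∞`, `liminf V_T(y₀) ≥ μ`; taking the supremum over `μ` gives the claim.
-/

open MeasureTheory Filter Topology Set

noncomputable section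

variable {m : ℕ} {U₀ : Type*} [MetricSpace U₀] [CompactSpace U₀]
  [MeasurableSpace U₀] [BorelSpace U₀]

/-- The set `G = {(y,u) : y ∈ Y, u ∈ U y, f (y,u) ∈ Y}`. -/
def Gset (Y : Set (Fin m → ℝ)) (U : (Fin m → ℝ) → Set U₀)
    (f : (Fin m → ℝ) × U₀ → (Fin m → ℝ)) : Set ((Fin m → ℝ) × U₀) :=
  {p | p.1 ∈ Y ∧ p.2 ∈ U p.1 ∧ f p ∈ Y}

/-- Admissible process from the initial condition `y₀`. -/
def Admissible (Y : Set (Fin m → ℝ)) (U : (Fin m → ℝ) → Set U₀)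
    (f : (Fin m → ℝ) × U₀ → (Fin m → ℝ)) (y₀ : Fin m → ℝ)
    (y : ℕ → (Fin m → ℝ)) (u : ℕ → U₀) : Prop :=
  y 0 = y₀ ∧ ∀ t : ℕ, u t ∈ U (y t) ∧ y t ∈ Y ∧ y (t + 1) = f (y t, u t)

/-- Admissible process without a prescribed initial condition. -/
def AdmissibleProc (Y : Set (Fin m → ℝ)) (U : (Fin m → ℝ) → Set U₀)
    (f : (Fin m → ℝ) × U₀ → (Fin m → ℝ))
    (y : ℕ → (Fin m → ℝ)) (u : ℕ → U₀) : Prop :=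
  ∀ t : ℕ, u t ∈ U (y t) ∧ y t ∈ Y ∧ y (t + 1) = f (y t, u t)

/-- The finite-horizon value function `V_T(y₀)`. -/
def VT (Y : Set (Fin m → ℝ)) (U : (Fin m → ℝ) → Set U₀)
    (f : (Fin m → ℝ) × U₀ → (Fin m → ℝ)) (k : (Fin m → ℝ) × U₀ → ℝ)
    (T : ℕ) (y₀ : Fin m → ℝ) : ℝ :=
  sInf {c | ∃ y u, Admissible Y U f y₀ y u ∧
    c = (∑ t ∈ Finset.range T, k (y t, u t)) / (T : ℝ)}

/-- The discounted value function `h_α(y₀)`. -/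
def hdisc (Y : Set (Fin m → ℝ)) (U : (Fin m → ℝ) → Set U₀)
    (f : (Fin m → ℝ) × U₀ → (Fin m → ℝ)) (k : (Fin m → ℝ) × U₀ → ℝ)
    (α : ℝ) (y₀ : Fin m → ℝ) : ℝ :=
  (1 - α) * sInf {c | ∃ y u, Admissible Y U f y₀ y u ∧
    c = ∑' t : ℕ, α ^ t * k (y t, u t)}

/-- The set `W` of probability measures on `G` with zero drift. -/
def Wset (Y : Set (Fin m → ℝ)) (U : (Fin m → ℝ) → Set U₀)
    (f : (Fin m → ℝ) × U₀ → (Fin m → ℝ)) :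
    Set (Measure ((Fin m → ℝ) × U₀)) :=
  {γ | IsProbabilityMeasure γ ∧ γ (Gset Y U f)ᶜ = 0 ∧
    ∀ φ : (Fin m → ℝ) → ℝ, ContinuousOn φ Y →
      ∫ p, (φ (f p) - φ p.1) ∂γ = 0}

/-- The set `W₁(y₀)`. -/
def W1set (Y : Set (Fin m → ℝ)) (U : (Fin m → ℝ) → Set U₀)
    (f : (Fin m → ℝ) × U₀ → (Fin m → ℝ)) (y₀ : Fin m → ℝ) :
    Set (Measure ((Fin m → ℝ) × U₀)) :=
  {γ | γ ∈ Wset Y U f ∧ ∃ ξ : Measure ((Fin m → ℝ) × U₀),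
    IsFiniteMeasure ξ ∧ ξ (Gset Y U f)ᶜ = 0 ∧
    ∀ φ : (Fin m → ℝ) → ℝ, ContinuousOn φ Y →
      ∫ p, (φ p.1 - φ y₀) ∂γ = ∫ p, (φ (f p) - φ p.1) ∂ξ}

/-- The set `W₂(y₀)`. -/
def W2set (Y : Set (Fin m → ℝ)) (U : (Fin m → ℝ) → Set U₀)
    (f : (Fin m → ℝ) × U₀ → (Fin m → ℝ)) (y₀ : Fin m → ℝ) :
    Set (Measure ((Fin m → ℝ) × U₀)) :=
  {γ | γ ∈ Wset Y U f ∧ ∃ ξ : ℕ → Measure ((Fin m → ℝ) × U₀),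
    (∀ i, IsFiniteMeasure (ξ i) ∧ (ξ i) (Gset Y U f)ᶜ = 0) ∧
    ∀ φ : (Fin m → ℝ) → ℝ, ContinuousOn φ Y →
      Tendsto (fun i => ∫ p, (φ (f p) - φ p.1) ∂(ξ i)) atTop
        (𝓝 (∫ p, (φ p.1 - φ y₀) ∂γ))}

/-- The optimal value `d*(y₀)` of the dual IDLP problem. -/
def dstar (Y : Set (Fin m → ℝ)) (U : (Fin m → ℝ) → Set U₀)
    (f : (Fin m → ℝ) × U₀ → (Fin m → ℝ)) (k : (Fin m → ℝ) × U₀ → ℝ)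
    (y₀ : Fin m → ℝ) : ℝ :=
  sSup {μ : ℝ | ∃ ψ η : (Fin m → ℝ) → ℝ, ContinuousOn ψ Y ∧ ContinuousOn η Y ∧
    ∀ p ∈ Gset Y U f,
      0 ≤ k p + (ψ y₀ - ψ p.1) + η (f p) - η p.1 - μ ∧
      0 ≤ ψ (f p) - ψ p.1}

/-- The optimal value `k*(y₀)` of the primal IDLP problem. -/
def kstar (Y : Set (Fin m → ℝ)) (U : (Fin m → ℝ) → Set U₀)
    (f : (Fin m → ℝ) × U₀ → (Fin m → ℝ)) (k : (Fin m → ℝ) × U₀ → ℝ)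
    (y₀ : Fin m → ℝ) : ℝ :=
  sInf {c | ∃ γ ξ : Measure ((Fin m → ℝ) × U₀),
    γ ∈ Wset Y U f ∧ IsFiniteMeasure ξ ∧ ξ (Gset Y U f)ᶜ = 0 ∧
    (∀ φ : (Fin m → ℝ) → ℝ, ContinuousOn φ Y →
      ∫ p, (φ y₀ - φ p.1) ∂γ + ∫ p, (φ (f p) - φ p.1) ∂ξ = 0) ∧
    c = ∫ p, k p ∂γ}

/-- Occupational measure of a process over `{0, …, T-1}`. -/
def occMeas (y : ℕ → (Fin m → ℝ)) (u : ℕ → U₀) (T : ℕ) :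
    Measure ((Fin m → ℝ) × U₀) :=
  (T : ENNReal)⁻¹ • ∑ t ∈ Finset.range T, Measure.dirac (y t, u t)

/-- Discounted occupational measure of a process. -/
def discMeas (α : ℝ) (y : ℕ → (Fin m → ℝ)) (u : ℕ → U₀) :
    Measure ((Fin m → ℝ) × U₀) :=
  Measure.sum fun t : ℕ =>
    ENNReal.ofReal ((1 - α) * α ^ t) • Measure.dirac (y t, u t)

/-- The set `Γ_T(y₀)` of occupational measures. -/
def GammaT (Y : Set (Fin m → ℝ)) (U : (Fin m → ℝ) → Set U₀)
    (f : (Fin m → ℝ) × U₀ → (Fin m → ℝ)) (y₀ : Fin m → ℝ) (T : ℕ) :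
    Set (Measure ((Fin m → ℝ) × U₀)) :=
  {γ | ∃ y u, Admissible Y U f y₀ y u ∧ γ = occMeas y u T}

/-- The set `Θ_α(y₀)` of discounted occupational measures. -/
def Theta (Y : Set (Fin m → ℝ)) (U : (Fin m → ℝ) → Set U₀)
    (f : (Fin m → ℝ) × U₀ → (Fin m → ℝ)) (α : ℝ) (y₀ : Fin m → ℝ) :
    Set (Measure ((Fin m → ℝ) × U₀)) :=
  {γ | ∃ y u, Admissible Y U f y₀ y u ∧ γ = discMeas α y u}

/-- Weak* convergence of a sequence of measures (tested against functions
continuous on `G`). -/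
def WeakStarTendstoOn (G : Set ((Fin m → ℝ) × U₀))
    (γs : ℕ → Measure ((Fin m → ℝ) × U₀))
    (γ : Measure ((Fin m → ℝ) × U₀)) : Prop :=
  ∀ q : (Fin m → ℝ) × U₀ → ℝ, ContinuousOn q G →
    Tendsto (fun i => ∫ p, q p ∂(γs i)) atTop (𝓝 (∫ p, q p ∂γ))

/-- A `T`-periodic process. -/
def PeriodicProc (y : ℕ → (Fin m → ℝ)) (u : ℕ → U₀) (T : ℕ) : Prop :=
  ∀ t : ℕ, y (t + T) = y t ∧ u (t + T) = u t

/-- The point `z` is finite-time reachable from `y₀`. -/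
def FTReachable (Y : Set (Fin m → ℝ)) (U : (Fin m → ℝ) → Set U₀)
    (f : (Fin m → ℝ) × U₀ → (Fin m → ℝ)) (y₀ z : Fin m → ℝ) : Prop :=
  ∃ (tb : ℕ) (ty : ℕ → (Fin m → ℝ)) (tu : ℕ → U₀),
    Admissible Y U f y₀ ty tu ∧ ty tb = z

/-- The set `Γ_per(y₀)` of occupational measures of periodic processes
finite-time reachable from `y₀`. -/
def GammaPer (Y : Set (Fin m → ℝ)) (U : (Fin m → ℝ) → Set U₀)
    (f : (Fin m → ℝ) × U₀ → (Fin m → ℝ)) (y₀ : Fin m → ℝ) :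
    Set (Measure ((Fin m → ℝ) × U₀)) :=
  {γ | ∃ (T : ℕ) (y : ℕ → (Fin m → ℝ)) (u : ℕ → U₀), 1 ≤ T ∧
    AdmissibleProc Y U f y u ∧ PeriodicProc y u T ∧
    FTReachable Y U f y₀ (y 0) ∧ γ = occMeas y u T}

/-- The optimal value `V_per(y₀)` over periodic regimes. -/
def Vper (Y : Set (Fin m → ℝ)) (U : (Fin m → ℝ) → Set U₀)
    (f : (Fin m → ℝ) × U₀ → (Fin m → ℝ)) (k : (Fin m → ℝ) × U₀ → ℝ)
    (y₀ : Fin m → ℝ) : ℝ :=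
  sInf {c | ∃ (T : ℕ) (y : ℕ → (Fin m → ℝ)) (u : ℕ → U₀), 1 ≤ T ∧
    AdmissibleProc Y U f y u ∧ PeriodicProc y u T ∧
    FTReachable Y U f y₀ (y 0) ∧
    c = (∑ t ∈ Finset.range T, k (y t, u t)) / (T : ℝ)}

/-- The set `K` of continuous functions used in the alternative
representation of the limit optimal values. -/
def Kcal (Y : Set (Fin m → ℝ)) (U : (Fin m → ℝ) → Set U₀)
    (f : (Fin m → ℝ) × U₀ → (Fin m → ℝ)) (k : (Fin m → ℝ) × U₀ → ℝ) :
    Set ((Fin m → ℝ) → ℝ) :=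
  {w | ContinuousOn w Y ∧ (∀ p ∈ Gset Y U f, w p.1 ≤ w (f p)) ∧
    ∀ γ ∈ Wset Y U f, ∫ p, w p.1 ∂γ ≤ ∫ p, k p ∂γ}

/-- The optimal value `d*(θ, y₀)` of the perturbed dual problem. -/
def dstarTheta (Y : Set (Fin m → ℝ)) (U : (Fin m → ℝ) → Set U₀)
    (f : (Fin m → ℝ) × U₀ → (Fin m → ℝ)) (k : (Fin m → ℝ) × U₀ → ℝ)
    (θ : ℝ) (y₀ : Fin m → ℝ) : ℝ :=
  sSup {μ : ℝ | ∃ ψ η : (Fin m → ℝ) → ℝ, ContinuousOn ψ Y ∧ ContinuousOn η Y ∧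
    ∀ p ∈ Gset Y U f,
      0 ≤ k p + (ψ y₀ - ψ p.1) + η (f p) - η p.1 - μ ∧
      -θ ≤ ψ (f p) - ψ p.1}

/-- The optimal value `d̄*(θ, y₀)` of the perturbed dual problem in the
`ψ(y₀)` form. -/
def dbarTheta (Y : Set (Fin m → ℝ)) (U : (Fin m → ℝ) → Set U₀)
    (f : (Fin m → ℝ) × U₀ → (Fin m → ℝ)) (k : (Fin m → ℝ) × U₀ → ℝ)
    (θ : ℝ) (y₀ : Fin m → ℝ) : ℝ :=
  sSup {c : ℝ | ∃ ψ η : (Fin m → ℝ) → ℝ, ContinuousOn ψ Y ∧ ContinuousOn η Y ∧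
    (∀ p ∈ Gset Y U f,
      0 ≤ k p - ψ p.1 + η (f p) - η p.1 ∧
      -θ ≤ ψ (f p) - ψ p.1) ∧ c = ψ y₀}

/-- The optimal value `k*(θ, y₀)` of the perturbed primal problem. -/
def kstarTheta (Y : Set (Fin m → ℝ)) (U : (Fin m → ℝ) → Set U₀)
    (f : (Fin m → ℝ) × U₀ → (Fin m → ℝ)) (k : (Fin m → ℝ) × U₀ → ℝ)
    (θ : ℝ) (y₀ : Fin m → ℝ) : ℝ :=
  sInf {c | ∃ γ ξ : Measure ((Fin m → ℝ) × U₀),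
    γ ∈ Wset Y U f ∧ IsFiniteMeasure ξ ∧ ξ (Gset Y U f)ᶜ = 0 ∧
    (∀ φ : (Fin m → ℝ) → ℝ, ContinuousOn φ Y →
      ∫ p, (φ y₀ - φ p.1) ∂γ + ∫ p, (φ (f p) - φ p.1) ∂ξ = 0) ∧
    c = ∫ p, k p ∂γ + θ * (ξ Set.univ).toReal}

theorem le_liminf_of_tendsto_of_eventually_le {ι β : Type*} [ConditionallyCompleteLinearOrder β]
    [TopologicalSpace β] [OrderTopology β] {l : Filter ι} [l.NeBot] {u v : ι → β} {b : β}
    (hv : Tendsto v l (𝓝 b)) (hvu : ∀ᶠ i in l, v i ≤ u i) (hu : IsBoundedUnder (· ≤ ·) l u) :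
    b ≤ liminf u l := by
  rw [← hv.liminf_eq]
  exact liminf_le_liminf hvu hv.isBoundedUnder_ge hu.isCoboundedUnder_ge

theorem abs_sum_range_div_le {a : ℕ → ℝ} {C : ℝ} (hC : 0 ≤ C) (ha : ∀ t, |a t| ≤ C) (T : ℕ) :
    |(∑ t ∈ Finset.range T, a t) / T| ≤ C := by
  rcases Nat.eq_zero_or_pos T with rfl | hT
  · simpa using hC
  have hsum : |∑ t ∈ Finset.range T, a t| ≤ T * C := by
    calc |∑ t ∈ Finset.range T, a t| ≤ ∑ t ∈ Finset.range T, |a t| :=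
          Finset.abs_sum_le_sum_abs _ _
      _ ≤ ∑ _t ∈ Finset.range T, C := Finset.sum_le_sum fun t _ => ha t
      _ = T * C := by simp
  rw [abs_div, Nat.abs_cast, div_le_iff₀ (by exact_mod_cast hT)]
  linarith

theorem sub_div_le_sum_range_div {a e : ℕ → ℝ} {μ C : ℝ} (hstep : ∀ t, μ + (e t - e (t + 1)) ≤ a t)
    (he : ∀ t, |e t| ≤ C) {T : ℕ} (hT : 0 < T) :
    μ - 2 * C / T ≤ (∑ t ∈ Finset.range T, a t) / T := by
  have hT' : (0 : ℝ) < T := by exact_mod_cast hT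
  have hsum : T * μ + (e 0 - e T) ≤ ∑ t ∈ Finset.range T, a t := by
    calc T * μ + (e 0 - e T) = ∑ t ∈ Finset.range T, (μ + (e t - e (t + 1))) := by
          rw [Finset.sum_add_distrib, Finset.sum_range_sub']
          simp
      _ ≤ ∑ t ∈ Finset.range T, a t := Finset.sum_le_sum fun t _ => hstep t
  rw [le_div_iff₀ hT', sub_mul, div_mul_cancel₀ _ hT'.ne']
  linarith [(abs_le.1 (he 0)).1, (abs_le.1 (he T)).2]

section

variable {V : Type*} {Y : Set (Fin m → ℝ)} {U : (Fin m → ℝ) → Set V}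
  {f : (Fin m → ℝ) × V → (Fin m → ℝ)} {k : (Fin m → ℝ) × V → ℝ}

theorem exists_admissible (hA : ∀ y ∈ Y, ∃ u ∈ U y, f (y, u) ∈ Y) {z : Fin m → ℝ} (hz : z ∈ Y) :
    ∃ y u, Admissible Y U f z y u := by
  choose feedback hU hY using hA
  let next : Y → Y := fun y => ⟨f (y, feedback y y.2), hY y y.2⟩
  let orbit : ℕ → Y := fun t => next^[t] ⟨z, hz⟩
  refine ⟨fun t => orbit t, fun t => feedback (orbit t) (orbit t).2, rfl, fun t => ?_⟩
  refine ⟨hU _ (orbit t).2, (orbit t).2, ?_⟩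
  exact congrArg Subtype.val (Function.iterate_succ_apply' next t ⟨z, hz⟩)

theorem Admissible.mem_Gset {y₀ : Fin m → ℝ} {y : ℕ → Fin m → ℝ} {u : ℕ → V}
    (h : Admissible Y U f y₀ y u) (t : ℕ) : (y t, u t) ∈ Gset Y U f := by
  obtain ⟨hu, hy, hsucc⟩ := h.2 t
  exact ⟨hy, hu, hsucc ▸ (h.2 (t + 1)).2.1⟩

theorem VT_le (hA : ∀ y ∈ Y, ∃ u ∈ U y, f (y, u) ∈ Y) {y₀ : Fin m → ℝ} (hy₀ : y₀ ∈ Y) {C : ℝ}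
    (hC : ∀ p : (Fin m → ℝ) × V, p.1 ∈ Y → |k p| ≤ C) (T : ℕ) : VT Y U f k T y₀ ≤ C := by
  have havg : ∀ y u, Admissible Y U f y₀ y u →
      |(∑ t ∈ Finset.range T, k (y t, u t)) / T| ≤ C := fun y u h =>
    abs_sum_range_div_le ((abs_nonneg _).trans (hC (y 0, u 0) (h.2 0).2.1))
      (fun t => hC (y t, u t) (h.2 t).2.1) T
  obtain ⟨y, u, h⟩ := exists_admissible hA hy₀
  refine le_trans ?_ (le_of_abs_le (havg y u h))
  refine csInf_le ⟨-C, ?_⟩ ⟨y, u, h, rfl⟩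
  rintro _ ⟨y', u', h', rfl⟩
  exact neg_le_of_abs_le (havg y' u' h')

theorem dstar_le {y₀ : Fin m → ℝ} {C x : ℝ} (hC : ∀ p ∈ Gset Y U f, -C ≤ k p)
    (h : ∀ μ ψ η, ContinuousOn ψ Y → ContinuousOn η Y →
      (∀ p ∈ Gset Y U f, 0 ≤ k p + (ψ y₀ - ψ p.1) + η (f p) - η p.1 - μ ∧
        0 ≤ ψ (f p) - ψ p.1) → μ ≤ x) :
    dstar Y U f k y₀ ≤ x := by
  refine csSup_le ⟨-C, 0, 0, continuousOn_const, continuousOn_const, fun p hp => ?_⟩ ?_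
  · simp only [Pi.zero_apply, sub_self]
    exact ⟨by linarith [hC p hp], le_rfl⟩
  · rintro μ ⟨ψ, η, hψ, hη, hfeas⟩
    exact h μ ψ η hψ hη hfeas

theorem sub_div_le_VT {y₀ : Fin m → ℝ} {μ C : ℝ} {ψ η : (Fin m → ℝ) → ℝ}
    (hfeas : ∀ p ∈ Gset Y U f, 0 ≤ k p + (ψ y₀ - ψ p.1) + η (f p) - η p.1 - μ ∧
      0 ≤ ψ (f p) - ψ p.1)
    (hη : ∀ y ∈ Y, |η y| ≤ C) (hne : ∃ y u, Admissible Y U f y₀ y u) {T : ℕ} (hT : 0 < T) :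
    μ - 2 * C / T ≤ VT Y U f k T y₀ := by
  obtain ⟨y₁, u₁, h₁⟩ := hne
  refine le_csInf ⟨_, y₁, u₁, h₁, rfl⟩ ?_
  rintro _ ⟨y, u, h, rfl⟩
  have hψ : Monotone fun t => ψ (y t) := monotone_nat_of_le_succ fun t => by
    simpa [(h.2 t).2.2] using (hfeas _ (h.mem_Gset t)).2
  refine sub_div_le_sum_range_div (fun t => ?_) (fun t => hη _ (h.2 t).2.1) hT
  have hk := (hfeas _ (h.mem_Gset t)).1
  have hψt : ψ y₀ ≤ ψ (y t) := h.1 ▸ hψ (Nat.zero_le t)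
  rw [← (h.2 t).2.2] at hk
  linarith

end

theorem stmt_3_general
    (Y : Set (Fin m → ℝ)) (hYcomp : IsCompact Y)
    (U : (Fin m → ℝ) → Set U₀)
    (f : (Fin m → ℝ) × U₀ → (Fin m → ℝ))
    (k : (Fin m → ℝ) × U₀ → ℝ) (hk : Continuous k)
    (hA : ∀ y ∈ Y, ∃ u ∈ U y, f (y, u) ∈ Y) :
    ∀ y₀ ∈ Y, dstar Y U f k y₀ ≤ liminf (fun T : ℕ => VT Y U f k T y₀) atTop := by
  intro y₀ hy₀
  obtain ⟨Ck, hCk⟩ := (hYcomp.prod isCompact_univ).exists_bound_of_continuousOn hk.continuousOn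
  have hkY : ∀ p : (Fin m → ℝ) × U₀, p.1 ∈ Y → |k p| ≤ Ck := fun p hp => hCk p ⟨hp, trivial⟩
  refine dstar_le (C := Ck) (fun p hp => neg_le_of_abs_le (hkY p hp.1)) ?_
  intro μ ψ η _ hηc hfeas
  obtain ⟨Cη, hCη⟩ := hYcomp.exists_bound_of_continuousOn hηc
  have hlim : Tendsto (fun T : ℕ => μ - 2 * Cη / T) atTop (𝓝 μ) := by
    simpa using tendsto_const_nhds.sub
      (tendsto_const_nhds.div_atTop tendsto_natCast_atTop_atTop (a := 2 * Cη))
  refine le_liminf_of_tendsto_of_eventually_le hlim ?_ (isBoundedUnder_of ⟨Ck, VT_le hA hy₀ hkY⟩)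
  filter_upwards [eventually_gt_atTop 0] with T hT
  exact sub_div_le_VT hfeas hCη (exists_admissible hA hy₀) hT

theorem stmt_3
    (Y : Set (Fin m → ℝ)) (hYne : Y.Nonempty) (hYcomp : IsCompact Y)
    (U : (Fin m → ℝ) → Set U₀)
    (hUne : ∀ y ∈ Y, (U y).Nonempty) (hUcomp : ∀ y ∈ Y, IsCompact (U y))
    (hUgraph : IsClosed {p : (Fin m → ℝ) × U₀ | p.1 ∈ Y ∧ p.2 ∈ U p.1})
    (f : (Fin m → ℝ) × U₀ → (Fin m → ℝ)) (hf : Continuous f)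
    (k : (Fin m → ℝ) × U₀ → ℝ) (hk : Continuous k)
    (hA : ∀ y ∈ Y, ∃ u ∈ U y, f (y, u) ∈ Y) :
    ∀ y₀ ∈ Y, dstar Y U f k y₀ ≤ liminf (fun T : ℕ => VT Y U f k T y₀) atTop :=
  stmt_3_general Y hYcomp U f k hk hA
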